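/- arXiv:1912.10680 — 3 statements merged into one kernel-verified Lean document; each statement's English description precedes it below -/
import Mathlib

section
/- For all α ∈ (0, 1/2), the flipped α-continued fraction map satisfies the matching identity T_α(α) = T_α²(1-α). -/
open Set MeasureTheory Filter Topology
open scoped Classical

/-- The Gauss map `G(x) = 1/x - ⌊1/x⌋`. -/
noncomputable def gauss (x : ℝ) : ℝ := Int.fract (1 / x)

/-- The flipped region `D_α = ⋃_{n ≥ 1} [1/(n+α), 1/n]`. -/
def Dset (α : ℝ) : Set ℝ := ⋃ n : ℕ, Set.Icc (1 / ((n : ℝ) + 1 + α)) (1 / ((n : ℝ) + 1))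

/-- The flipped α-continued fraction map `T_α`. -/
noncomputable def T (α x : ℝ) : ℝ := if x ∈ Dset α then 1 - gauss x else gauss x

/-!
On `(0, 1]` a point lies in `D_α` exactly when `G(x) ≤ α`, so `T_α` flips precisely when
`G(x) ≤ α`. Since `1/(1-α) = 1 + α/(1-α)`, we get `G(1-α) = α/(1-α) > α`, hence no flip and
`T_α(1-α) = α/(1-α)`. Finally `1/(α/(1-α)) = 1/α - 1` differs from `1/α` by an integer, so
`G`, and with it `T_α`, takes the same value at `α` and at `α/(1-α)`.
-/

lemma exists_int_le_le_add_iff_fract_le {y α : ℝ} (hα : α < 1) :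
    (∃ m : ℤ, m ≤ y ∧ y ≤ m + α) ↔ Int.fract y ≤ α := by
  constructor
  · rintro ⟨m, hmy, hym⟩
    have hfloor : ⌊y⌋ = m := Int.floor_eq_iff.2 ⟨hmy, by linarith⟩
    rw [Int.fract, hfloor]
    linarith
  · intro h
    exact ⟨⌊y⌋, Int.floor_le y, by rw [Int.fract] at h; linarith⟩

lemma mem_Dset_iff_gauss_le {α x : ℝ} (hα0 : 0 ≤ α) (hα1 : α < 1) (hx0 : 0 < x) (hx1 : x ≤ 1) :
    x ∈ Dset α ↔ gauss x ≤ α := by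
  rw [gauss, ← exists_int_le_le_add_iff_fract_le hα1]
  simp only [Dset, mem_iUnion, mem_Icc]
  constructor
  · rintro ⟨n, hlo, hhi⟩
    have hn : (0 : ℝ) < n + 1 := by positivity
    refine ⟨n + 1, ?_, ?_⟩ <;> push_cast
    · exact (le_one_div hx0 hn).1 hhi
    · exact (one_div_le (by linarith) hx0).1 hlo
  · rintro ⟨m, hmy, hym⟩
    have hm : 0 < m := by
      have : (1 : ℝ) ≤ 1 / x := one_le_one_div hx0 hx1
      have : (0 : ℝ) < m := by linarith
      exact_mod_cast this
    obtain ⟨n, rfl⟩ : ∃ n : ℕ, m = n + 1 := ⟨(m - 1).toNat, by omega⟩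
    push_cast at hmy hym
    have hn : (0 : ℝ) < n + 1 := by positivity
    exact ⟨n, (one_div_le (by linarith) hx0).2 hym, (le_one_div hx0 hn).2 hmy⟩

lemma T_eq_ite_gauss_le {α x : ℝ} (hα0 : 0 ≤ α) (hα1 : α < 1) (hx0 : 0 < x) (hx1 : x ≤ 1) :
    T α x = if gauss x ≤ α then 1 - gauss x else gauss x := by
  simp only [T, mem_Dset_iff_gauss_le hα0 hα1 hx0 hx1]

lemma gauss_one_sub {α : ℝ} (hα0 : 0 ≤ α) (hα : α < 1 / 2) : gauss (1 - α) = α / (1 - α) := by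
  have h1α : 0 < 1 - α := by linarith
  rw [gauss, Int.fract_eq_iff]
  refine ⟨by positivity, by rw [div_lt_one h1α]; linarith, 1, ?_⟩
  field_simp
  push_cast
  ring

lemma gauss_div_one_sub {α : ℝ} (hα : α ≠ 0) : gauss (α / (1 - α)) = gauss α := by
  have hinv : 1 / (α / (1 - α)) = 1 / α - (1 : ℤ) := by
    push_cast
    field_simp
  rw [gauss, gauss, hinv, Int.fract_sub_intCast]

/-- matching identity `T_α(α) = T_α²(1-α)` for `α ∈ (0,1/2)`. -/
theorem stmt_1 (α : ℝ) (hα : α ∈ Set.Ioo (0:ℝ) (1/2)) :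
    T α α = T α (T α (1 - α)) := by
  obtain ⟨hα0, hα2⟩ := hα
  have hα1 : α < 1 := by linarith
  have h1α : 0 < 1 - α := by linarith
  have hno_flip : ¬ α / (1 - α) ≤ α := by
    rw [div_le_iff₀ h1α]
    nlinarith
  have hT_one_sub : T α (1 - α) = α / (1 - α) := by
    rw [T_eq_ite_gauss_le hα0.le hα1 h1α (by linarith), gauss_one_sub hα0.le hα2, if_neg hno_flip]
  rw [hT_one_sub, T_eq_ite_gauss_le hα0.le hα1 hα0 hα1.le,
    T_eq_ite_gauss_le hα0.le hα1 (by positivity) (by rw [div_le_one h1α]; linarith),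
    gauss_div_one_sub hα0.ne']
end

section
/- Let α ∈ (0,1) and x ∈ I_α = [min{α,1-α},1]. Then x is rational if and only if there exists an integer N ≥ 0 such that T_α^N(x) = 1. -/
open Set MeasureTheory Filter Topology
open scoped Classical

/-!
Irrationality is preserved by `x ↦ 1/x`, by taking fractional parts and by `y ↦ 1 - y`, hence by
`T_α`, so an orbit that reaches the rational point `1` starts at a rational point.

Conversely, for a rational `q = a/b ∈ (0, 1)` in lowest terms, both `G(q) = {b/a}` and `1 - G(q)`
have denominator `a < b`, so the denominator drops strictly along the orbit as long as `G ≠ 0`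
(which keeps the orbit in `(0, 1]`). Once `G(q) = 0`, `q = 1/m` lies in `D_α` and `T_α(q) = 1`.
-/

theorem Irrational.gauss {x : ℝ} (hx : Irrational x) : Irrational (gauss x) := by
  rw [_root_.gauss, Int.fract, one_div]
  exact hx.inv.sub_intCast _

theorem Irrational.T_apply (α : ℝ) {x : ℝ} (hx : Irrational x) : Irrational (T α x) := by
  unfold T
  split_ifs
  · simpa using hx.gauss.natCast_sub 1
  · exact hx.gauss

theorem Irrational.iterate_T (α : ℝ) {x : ℝ} (hx : Irrational x) (N : ℕ) :
    Irrational ((T α)^[N] x) :=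
  Function.Iterate.rec Irrational hx (fun _ hy => hy.T_apply α) N

theorem inv_natCast_mem_Dset {α : ℝ} (hα : 0 ≤ α) {m : ℕ} (hm : m ≠ 0) :
    (m : ℝ)⁻¹ ∈ Dset α := by
  obtain ⟨k, rfl⟩ := Nat.exists_eq_succ_of_ne_zero hm
  refine mem_iUnion.2 ⟨k, ?_, ?_⟩ <;> push_cast
  · rw [← one_div]
    exact one_div_le_one_div_of_le (by positivity) (by linarith)
  · rw [one_div]

theorem T_inv_natCast {α : ℝ} (hα : 0 ≤ α) {m : ℕ} (hm : m ≠ 0) : T α (m : ℝ)⁻¹ = 1 := by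
  rw [T, if_pos (inv_natCast_mem_Dset hα hm), gauss, one_div, inv_inv, Int.fract_natCast, sub_zero]

theorem T_mem_Ioc_of_gauss_ne_zero (α : ℝ) {x : ℝ} (hx : gauss x ≠ 0) : T α x ∈ Ioc 0 1 := by
  have hg₀ : 0 < gauss x := (Int.fract_nonneg _).lt_of_ne' hx
  have hg₁ : gauss x < 1 := Int.fract_lt_one _
  unfold T
  split_ifs <;> constructor <;> linarith

theorem gauss_ratCast (q : ℚ) : gauss q = (Int.fract q⁻¹ : ℚ) := by
  rw [gauss, one_div, Rat.cast_fract, Rat.cast_inv]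

theorem exists_T_ratCast_eq_den_eq_num (α : ℝ) {q : ℚ} (hq : q ≠ 0) :
    ∃ r : ℚ, T α q = r ∧ r.den = q.num.natAbs := by
  have hden : (Int.fract q⁻¹).den = q.num.natAbs := by
    rw [Rat.den_intFract, Rat.den_inv_of_ne_zero hq]
  unfold T
  split_ifs
  · refine ⟨1 - Int.fract q⁻¹, by push_cast [gauss_ratCast]; rfl, ?_⟩
    rw [← Nat.cast_one, Rat.natCast_sub_den, hden]
  · exact ⟨Int.fract q⁻¹, gauss_ratCast q, hden⟩

theorem exists_iterate_T_ratCast_eq_one {α : ℝ} (hα : 0 ≤ α) {q : ℚ} (hq : q ∈ Ioc 0 1) :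
    ∃ N : ℕ, (T α)^[N] q = 1 := by
  induction h : q.den using Nat.strong_induction_on generalizing q with
  | _ n ih =>
  obtain ⟨hq₀, hq₁⟩ := hq
  rcases hq₁.eq_or_lt with rfl | hq₁
  · exact ⟨0, by simp⟩
  by_cases hg : gauss q = 0
  · obtain ⟨m, hm⟩ : ∃ m : ℤ, (m : ℝ) = (q : ℝ)⁻¹ := by
      simpa [gauss, Int.fract_eq_zero_iff] using hg
    have hm₀ : 0 < m := by
      have : (0 : ℝ) < q := by exact_mod_cast hq₀
      exact_mod_cast hm ▸ inv_pos.2 this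
    lift m to ℕ using hm₀.le
    refine ⟨1, ?_⟩
    rw [Function.iterate_one, ← inv_inv (q : ℝ), ← hm]
    exact_mod_cast T_inv_natCast hα (by omega)
  · obtain ⟨r, hr, hr_den⟩ := exists_T_ratCast_eq_den_eq_num α hq₀.ne'
    have hr_mem : r ∈ Ioc 0 1 := by
      have := T_mem_Ioc_of_gauss_ne_zero α hg
      rw [hr] at this
      exact ⟨by exact_mod_cast this.1, by exact_mod_cast this.2⟩
    have hr_den_lt : r.den < n := by
      have hnum₀ : 0 < q.num := Rat.num_pos.2 hq₀
      have hnum : q.num < q.den := Rat.num_lt_denom_iff.2 hq₁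
      omega
    obtain ⟨N, hN⟩ := ih r.den hr_den_lt hr_mem rfl
    exact ⟨N + 1, by rw [Function.iterate_succ_apply, hr, hN]⟩

/-- `x ∈ I_α` is rational iff its `T_α`-orbit reaches `1`. -/
theorem stmt_2 (α : ℝ) (hα : α ∈ Set.Ioo (0:ℝ) 1) (x : ℝ)
    (hx : x ∈ Set.Icc (min α (1 - α)) 1) :
    (∃ q : ℚ, (q : ℝ) = x) ↔ ∃ N : ℕ, (T α)^[N] x = 1 := by
  obtain ⟨hα₀, hα₁⟩ := hα
  constructor
  · rintro ⟨q, rfl⟩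
    have hmin : 0 < min α (1 - α) := lt_min hα₀ (by linarith)
    exact exists_iterate_T_ratCast_eq_one hα₀.le
      ⟨by exact_mod_cast hmin.trans_le hx.1, by exact_mod_cast hx.2⟩
  · rintro ⟨N, hN⟩
    by_contra hrat
    exact not_irrational_one (hN ▸ Irrational.iterate_T α hrat N)
end

section
/- For α ∈ (1/2, g) where g = (√5-1)/2, the map T_α satisfies T_α²(α) = T_α(1-α); that is, matching holds with exponents M+1 = 2 and N-1 = 1. -/
open Set MeasureTheory Filter Topology
open scoped Classical

/-- matching `T_α²(α) = T_α(1-α)` for `α ∈ (1/2, g)`,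
where `g = (√5 - 1)/2`. -/
theorem stmt_8 (α : ℝ) (hα : α ∈ Set.Ioo (1/2 : ℝ) ((Real.sqrt 5 - 1) / 2)) :
    T α (T α α) = T α (1 - α) := by
  obtain ⟨h1, h2⟩ := hα
  have h5 : Real.sqrt 5 ^ 2 = 5 := Real.sq_sqrt (by norm_num)
  have hs0 : (0:ℝ) ≤ Real.sqrt 5 := Real.sqrt_nonneg 5
  have hg : α ^ 2 + α < 1 := by nlinarith
  have hα0 : (0:ℝ) < α := by linarith
  have hα1 : α < 1 := by nlinarith
  have hα23 : α < 2/3 := by nlinarith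
  have h1α : (0:ℝ) < 1 - α := by linarith
  -- α ∉ Dset α
  have hnd : α ∉ Dset α := by
    simp only [Dset, mem_iUnion, not_exists]
    intro n
    rw [mem_Icc, not_and_or]
    rcases n with _ | m
    · left
      rw [not_le]
      push_cast
      rw [lt_div_iff₀ (by linarith)]
      nlinarith
    · right
      rw [not_le]
      have hm : (0:ℝ) ≤ (m:ℝ) := Nat.cast_nonneg m
      have : (1:ℝ) / ((m:ℝ) + 1 + 1) ≤ 1/2 := by
        rw [div_le_div_iff₀ (by linarith) (by norm_num)]
        linarith
      push_cast
      linarith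
  -- T α α = 1/α - 1
  have hfl1 : ⌊1/α⌋ = 1 := by
    rw [Int.floor_eq_iff]
    constructor
    · rw [le_div_iff₀ hα0]; push_cast; linarith
    · rw [div_lt_iff₀ hα0]; push_cast; linarith
  have hTα : T α α = 1/α - 1 := by
    rw [T, if_neg hnd, gauss, Int.fract, hfl1]
    norm_num
  -- y := 1/α - 1 ∈ Dset α
  have hy : 1/α - 1 = (1 - α)/α := by field_simp
  have hyd : 1/α - 1 ∈ Dset α := by
    rw [Dset, mem_iUnion]
    refine ⟨0, ?_⟩
    rw [mem_Icc]
    push_cast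
    constructor
    · rw [hy, div_le_div_iff₀ (by linarith) hα0]
      nlinarith
    · rw [sub_le_iff_le_add]
      rw [div_le_iff₀ hα0]
      norm_num
      linarith
  have hyinv : 1/(1/α - 1) = α/(1-α) := by
    rw [hy, one_div_div]
  have hfl2 : ⌊1/(1/α - 1)⌋ = 1 := by
    rw [hyinv, Int.floor_eq_iff]
    constructor
    · rw [le_div_iff₀ h1α]; push_cast; linarith
    · rw [div_lt_iff₀ h1α]; push_cast; linarith
  have hTy : T α (1/α - 1) = 1 - (α/(1-α) - 1) := by
    rw [T, if_pos hyd, gauss, Int.fract, hfl2, hyinv]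
    push_cast
    ring
  -- 1 - α ∈ Dset α
  have h1ad : 1 - α ∈ Dset α := by
    rw [Dset, mem_iUnion]
    refine ⟨1, ?_⟩
    rw [mem_Icc]
    push_cast
    constructor
    · rw [div_le_iff₀ (by linarith)]
      nlinarith
    · rw [le_div_iff₀ (by norm_num)]
      linarith
  have hfl3 : ⌊1/(1-α)⌋ = 2 := by
    rw [Int.floor_eq_iff]
    constructor
    · rw [le_div_iff₀ h1α]; push_cast; linarith
    · rw [div_lt_iff₀ h1α]; push_cast; linarith
  have hT1a : T α (1 - α) = 1 - (1/(1-α) - 2) := by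
    rw [T, if_pos h1ad, gauss, Int.fract, hfl3]
    push_cast
    ring
  rw [hTα, hTy, hT1a]
  field_simp
  ring
end
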